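/- Let G be a connected finite weighted graph with positive edge weights, and let u and v be two vertices of G such that: the shortest u-v path P = (u = v_0, v_1, ..., v_k = v) in G is unique, and for every vertex x of G there is a unique vertex v_i on P with d_G(x, v_i) = d_G(x, V(P)). For 0 ≤ i ≤ k let V_i = {x ∈ V(G) : d_G(x, v_i) = d_G(x, V(P))} and let G_i = G[V_i] be the induced subgraph (with edge weights inherited from G). Then for each 0 ≤ i ≤ k and every vertex x ∈ V_i, the distance from v_i to x in G_i equals the distance from v_i to x in G: d_{G_i}(v_i, x) = d_G(v_i, x). -/

import Mathlib

open SimpleGraph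

/-- The weighted length of a walk: the sum of the weights of its edges. -/
def SimpleGraph.Walk.wlength {V : Type*} {G : SimpleGraph V} (w : V → V → ℝ) {x y : V}
    (p : G.Walk x y) : ℝ :=
  (p.darts.map fun d => w d.toProd.1 d.toProd.2).sum

/-- The weighted distance between two vertices: the minimum weighted length of a walk. -/
noncomputable def SimpleGraph.wdist {V : Type*} (G : SimpleGraph V) (w : V → V → ℝ)
    (x y : V) : ℝ :=
  sInf {r : ℝ | ∃ p : G.Walk x y, p.wlength w = r}

/-- The weighted distance from a vertex to a set of vertices. -/
noncomputable def SimpleGraph.wdistS {V : Type*} (G : SimpleGraph V) (w : V → V → ℝ)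
    (x : V) (S : Set V) : ℝ :=
  sInf (G.wdist w x '' S)

/-- `Vset G w P i` is the set of vertices whose nearest vertex on the walk `P` is `P.getVert i`,
i.e. `V_i = {x : d_G(x, v_i) = d_G(x, V(P))}`. -/
def Vset {V : Type*} (G : SimpleGraph V) (w : V → V → ℝ) {u v : V} (P : G.Walk u v)
    (i : ℕ) : Set V :=
  {x : V | G.wdist w x (P.getVert i) = G.wdistS w x {z | z ∈ P.support}}

/-!
If `s ∈ S` is a nearest point of `S` to `x` and `y` lies on a shortest walk from `x` to `s`, then
for every `z ∈ S` we have `d(x, y) + d(y, s) = d(x, s) ≤ d(x, z) ≤ d(x, y) + d(y, z)`, so `s` is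
also a nearest point of `S` to `y`. Hence a shortest walk of `G` between `x ∈ V_i` and `v_i` stays
inside `V_i`, which gives `d_{G_i}(v_i, x) ≤ d_G(v_i, x)`; the reverse inequality holds because
walks of `G_i` are walks of `G`.
-/

namespace SimpleGraph

variable {V : Type*} {G : SimpleGraph V} {w : V → V → ℝ}

namespace Walk

@[simp]
lemma wlength_nil {x : V} : (nil : G.Walk x x).wlength w = 0 := rfl

@[simp]
lemma wlength_cons {x y z : V} (h : G.Adj x y) (p : G.Walk y z) :
    (cons h p).wlength w = w x y + p.wlength w := by
  simp [wlength]

lemma wlength_append {x y z : V} (p : G.Walk x y) (q : G.Walk y z) :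
    (p.append q).wlength w = p.wlength w + q.wlength w := by
  simp [wlength, darts_append]

lemma wlength_reverse (hsymm : ∀ a b, w a b = w b a) {x y : V} (p : G.Walk x y) :
    p.reverse.wlength w = p.wlength w := by
  simp only [wlength, darts_reverse, List.map_reverse, List.sum_reverse, List.map_map]
  congr 1
  exact List.map_congr_left fun d _ => hsymm _ _

lemma wlength_map {V' : Type*} {G' : SimpleGraph V'} (f : G →g G') (w' : V' → V' → ℝ)
    {x y : V} (p : G.Walk x y) :
    (p.map f).wlength w' = p.wlength fun a b => w' (f a) (f b) := by
  simp [wlength, darts_map, Function.comp_def]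

lemma wlength_induce (s : Set V) {x y : V} (p : G.Walk x y) (hp : ∀ z ∈ p.support, z ∈ s) :
    (p.induce s hp).wlength (fun a b : s => w a b) = p.wlength w := by
  simpa using (wlength_map (Embedding.induce s).toHom w (p.induce s hp)).symm

variable (hw : ∀ a b, G.Adj a b → 0 ≤ w a b)
include hw

lemma wlength_nonneg {x y : V} (p : G.Walk x y) : 0 ≤ p.wlength w := by
  induction p with
  | nil => simp
  | cons h q ih => rw [wlength_cons]; exact add_nonneg (hw _ _ h) ih

lemma wlength_dropUntil_le [DecidableEq V] {x y z : V} (p : G.Walk x y) (h : z ∈ p.support) :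
    (p.dropUntil z h).wlength w ≤ p.wlength w := by
  conv_rhs => rw [← p.take_spec h, wlength_append]
  linarith [wlength_nonneg hw (p.takeUntil z h)]

lemma wlength_bypass_le [DecidableEq V] {x y : V} (p : G.Walk x y) :
    p.bypass.wlength w ≤ p.wlength w := by
  induction p with
  | nil => simp [bypass]
  | cons h q ih =>
    rw [bypass]
    split_ifs with hs
    · calc (q.bypass.dropUntil _ hs).wlength w ≤ q.bypass.wlength w :=
            wlength_dropUntil_le hw _ hs
        _ ≤ q.wlength w := ih
        _ ≤ (cons h q).wlength w := by rw [wlength_cons]; linarith [hw _ _ h]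
    · rw [wlength_cons, wlength_cons]; linarith

end Walk

lemma wdist_comm (hsymm : ∀ a b, w a b = w b a) (x y : V) : G.wdist w x y = G.wdist w y x := by
  unfold wdist
  congr 1
  ext r
  exact ⟨fun ⟨p, hp⟩ => ⟨p.reverse, (p.wlength_reverse hsymm).trans hp⟩,
    fun ⟨p, hp⟩ => ⟨p.reverse, (p.wlength_reverse hsymm).trans hp⟩⟩

lemma le_wdist {x y : V} {r : ℝ} (hxy : G.Reachable x y)
    (h : ∀ p : G.Walk x y, r ≤ p.wlength w) : r ≤ G.wdist w x y :=
  le_csInf (hxy.elim fun p => ⟨_, p, rfl⟩) fun _ ⟨p, hp⟩ => hp ▸ h p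

section Nonneg

variable (hw : ∀ a b, G.Adj a b → 0 ≤ w a b)
include hw

lemma wdist_nonneg (x y : V) : 0 ≤ G.wdist w x y :=
  Real.sInf_nonneg fun _ ⟨p, hp⟩ => hp ▸ p.wlength_nonneg hw

lemma wdist_le_wlength {x y : V} (p : G.Walk x y) : G.wdist w x y ≤ p.wlength w :=
  csInf_le ⟨0, fun _ ⟨q, hq⟩ => hq ▸ q.wlength_nonneg hw⟩ ⟨p, rfl⟩

lemma exists_wlength_eq_wdist [Fintype V] {x y : V} (hxy : G.Reachable x y) :
    ∃ p : G.Walk x y, p.wlength w = G.wdist w x y := by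
  classical
  have : Nonempty (G.Path x y) := hxy.elim fun p => ⟨p.toPath⟩
  obtain ⟨p, hp⟩ := Finite.exists_min fun p : G.Path x y => p.1.wlength w
  refine ⟨p, le_antisymm (le_wdist hxy fun q => ?_) (wdist_le_wlength hw p.1)⟩
  exact (hp q.toPath).trans (q.wlength_bypass_le hw)

lemma wdist_triangle [Fintype V] {x y z : V} (hxy : G.Reachable x y) (hyz : G.Reachable y z) :
    G.wdist w x z ≤ G.wdist w x y + G.wdist w y z := by
  obtain ⟨p, hp⟩ := exists_wlength_eq_wdist hw hxy
  obtain ⟨q, hq⟩ := exists_wlength_eq_wdist hw hyz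
  calc G.wdist w x z ≤ (p.append q).wlength w := wdist_le_wlength hw _
    _ = G.wdist w x y + G.wdist w y z := by rw [Walk.wlength_append, hp, hq]

lemma wdist_add_wdist_le_of_mem_support [DecidableEq V] {x y z : V} (p : G.Walk x z)
    (hp : p.wlength w = G.wdist w x z) (hy : y ∈ p.support) :
    G.wdist w x y + G.wdist w y z ≤ G.wdist w x z := by
  rw [← hp, ← p.take_spec hy, Walk.wlength_append]
  exact add_le_add (wdist_le_wlength hw _) (wdist_le_wlength hw _)

lemma wdistS_le_wdist {x z : V} {S : Set V} (hz : z ∈ S) : G.wdistS w x S ≤ G.wdist w x z :=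
  csInf_le ⟨0, fun _ ⟨_, _, h⟩ => h ▸ wdist_nonneg hw _ _⟩ ⟨z, hz, rfl⟩

lemma wdist_eq_wdistS_of_mem_support [Fintype V] (hG : G.Connected) {x y s : V} {S : Set V}
    (hs : s ∈ S) (hx : G.wdist w x s = G.wdistS w x S) (p : G.Walk x s)
    (hp : p.wlength w = G.wdist w x s) (hy : y ∈ p.support) :
    G.wdist w y s = G.wdistS w y S := by
  classical
  refine le_antisymm (le_csInf ⟨_, s, hs, rfl⟩ ?_) (wdistS_le_wdist hw hs)
  rintro _ ⟨z, hz, rfl⟩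
  have hsplit := wdist_add_wdist_le_of_mem_support hw p hp hy
  have hnearest := wdistS_le_wdist (x := x) hw hz
  have htriangle := wdist_triangle (w := w) hw (hG x y) (hG y z)
  linarith

end Nonneg

lemma wdist_map_le {V' : Type*} {G' : SimpleGraph V'} {w' : V' → V' → ℝ}
    (hw' : ∀ a b, G'.Adj a b → 0 ≤ w' a b) (f : G →g G') {x y : V} (hxy : G.Reachable x y) :
    G'.wdist w' (f x) (f y) ≤ G.wdist (fun a b => w' (f a) (f b)) x y :=
  le_wdist hxy fun p => (p.wlength_map f w').symm ▸ wdist_le_wlength hw' (p.map f)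

end SimpleGraph

theorem induced_Vset_distance_general {V : Type*} [Fintype V] (G : SimpleGraph V)
    (hG : G.Connected) (w : V → V → ℝ) (hsymm : ∀ a b : V, w a b = w b a)
    (hpos : ∀ a b : V, G.Adj a b → 0 < w a b) (u v : V)
    (P : G.Walk u v) :
    ∀ i : ℕ, i ≤ P.length → ∀ a b : (Vset G w P i), (a : V) = P.getVert i →
      (G.induce (Vset G w P i)).wdist (fun p q => w (p : V) (q : V)) a b =
        G.wdist w (P.getVert i) (b : V) := by
  rintro i - ⟨a, ha⟩ b (rfl : a = P.getVert i)
  have hw : ∀ a b, G.Adj a b → 0 ≤ w a b := fun a b h => (hpos a b h).le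
  obtain ⟨Q, hQ⟩ := exists_wlength_eq_wdist hw (hG b (P.getVert i))
  have hQ_sub : ∀ y ∈ Q.reverse.support, y ∈ Vset G w P i := fun y hy =>
    wdist_eq_wdistS_of_mem_support hw hG (P.getVert_mem_support i) b.2 Q hQ
      (by simpa using hy)
  let Q' := Q.reverse.induce _ hQ_sub
  refine le_antisymm ?_ (wdist_map_le hw (Embedding.induce _).toHom ⟨Q'⟩)
  calc _ ≤ Q'.wlength fun p q : Vset G w P i => w p q :=
       wdist_le_wlength (G := G.induce _) (fun _ _ h => hw _ _ h) Q'
    _ = G.wdist w (P.getVert i) b := by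
      rw [Walk.wlength_induce, Walk.wlength_reverse hsymm, hQ, wdist_comm hsymm]

/-- **Lemma 5.** Under conditions (1) and (2), for every `x ∈ V_i` the distance from
`v_i` to `x` inside the induced subgraph `G_i = G[V_i]` (with inherited weights) equals
the distance from `v_i` to `x` in `G`. -/
theorem induced_Vset_distance {V : Type*} [Fintype V] (G : SimpleGraph V)
    (hG : G.Connected) (w : V → V → ℝ) (hsymm : ∀ a b : V, w a b = w b a)
    (hpos : ∀ a b : V, G.Adj a b → 0 < w a b) (u v : V)
    (P : G.Walk u v) (hP : P.IsPath) (hPshort : P.wlength w = G.wdist w u v)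
    (hPuniq : ∀ Q : G.Walk u v, Q.IsPath → Q.wlength w = G.wdist w u v → Q = P)
    (hnear : ∀ x : V, ∃! y : V, y ∈ P.support ∧
      G.wdist w x y = G.wdistS w x {z | z ∈ P.support}) :
    ∀ i : ℕ, i ≤ P.length → ∀ a b : (Vset G w P i), (a : V) = P.getVert i →
      (G.induce (Vset G w P i)).wdist (fun p q => w (p : V) (q : V)) a b =
        G.wdist w (P.getVert i) (b : V) :=
  induced_Vset_distance_general G hG w hsymm hpos u v P
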